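/- Let O_x be a space operator with Fourier symbol F satisfying Re(F(γ)) < 0 for all γ ∈ ℝ^d, and suppose u_ν solves the fractional Cauchy problem ∂^ν u/∂t^ν = O_x u with u(0,·) = f₀ (Fourier-transformable) and vanishing higher initial time-derivatives, so that its Fourier–Laplace transform is LFu_ν(μ,γ) = μ^{ν-1} Ff₀(γ)/(μ^ν - F(γ)). If u₀ = lim_{ν↓0} u_ν exists pointwise and LF u₀ = lim_{ν↓0} LF u_ν, then Fu₀(t,γ) = Ff₀(γ)/(1 - F(γ)) for all t ≥ 0; i.e., u₀ is independent of t and solves u₀(x) - f₀(x) = O_x u₀(x). -/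

import Mathlib

/-!
The Laplace transform `∫_{t>0} e^{-zt} h(t) dt` of a continuous `h` with `e^{-σt} h(t)` integrable
for every `σ > 0` is holomorphic on `Re z > 0`. If it vanishes at the positive reals it vanishes on
the whole half-plane, in particular on the line `Re z = 1`; there it is the Fourier transform of
`1_{t>0} e^{-t} h(t)`, so Fourier inversion gives `h = 0` on `[0, ∞)` (Lerch's theorem).

In the theorem, `μ^{ν-1} Ff₀(γ)/(μ^ν - F(γ))` is continuous at `ν = 0`, where it equals
`μ⁻¹ Ff₀(γ)/(1 - F(γ))`, the Laplace transform of a constant (`1 - F(γ) ≠ 0` because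
`Re F(γ) < 0`). So `Fu₀(·, γ)` minus that constant has vanishing Laplace transform.
-/

open MeasureTheory Set Filter Topology FourierTransform Complex

section Laplace

variable {E : Type*} [NormedAddCommGroup E] [NormedSpace ℂ E]

def LaplaceConvergent (h : ℝ → E) (z : ℂ) : Prop :=
  IntegrableOn (fun t : ℝ => cexp (-z * t) • h t) (Ioi 0)

noncomputable def laplace (h : ℝ → E) (z : ℂ) : E :=
  ∫ t in Ioi (0:ℝ), cexp (-z * t) • h t

lemma norm_cexp_neg_mul_ofReal (z : ℂ) (t : ℝ) : ‖cexp (-z * t)‖ = Real.exp (-z.re * t) := by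
  simp [Complex.norm_exp]

lemma laplaceConvergent_of_re {h : ℝ → E} {z : ℂ} (hh : Continuous h)
    (hz : LaplaceConvergent h z.re) : LaplaceConvergent h z :=
  hz.norm.mono' (by fun_prop : Continuous fun t : ℝ => cexp (-z * t) • h t).aestronglyMeasurable
    (.of_forall fun t => by simp only [norm_smul, norm_cexp_neg_mul_ofReal, ofReal_re, le_refl])

lemma laplaceConvergent_const (c : E) {μ : ℝ} (hμ : 0 < μ) :
    LaplaceConvergent (fun _ => c) μ :=
  (integrableOn_exp_mul_complex_Ioi (a := -μ) (by simpa using hμ) 0).smul_const c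

lemma LaplaceConvergent.sub {h g : ℝ → E} {z : ℂ} (hh : LaplaceConvergent h z)
    (hg : LaplaceConvergent g z) : LaplaceConvergent (fun t => h t - g t) z := by
  unfold LaplaceConvergent
  simp_rw [smul_sub]
  exact Integrable.sub hh hg

lemma laplace_sub {h g : ℝ → E} {z : ℂ} (hh : LaplaceConvergent h z)
    (hg : LaplaceConvergent g z) :
    laplace (fun t => h t - g t) z = laplace h z - laplace g z := by
  simp only [laplace, smul_sub]
  exact integral_sub hh hg

lemma mul_rexp_neg_two_mul_le {a t : ℝ} (ha : 0 < a) :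
    t * Real.exp (-(2 * a) * t) ≤ a⁻¹ * Real.exp (-a * t) := by
  have hat : a * t ≤ Real.exp (a * t) := by linarith [Real.add_one_le_exp (a * t)]
  calc t * Real.exp (-(2 * a) * t) = a⁻¹ * (a * t) * Real.exp (-(2 * a) * t) := by
        field_simp
    _ ≤ a⁻¹ * Real.exp (a * t) * Real.exp (-(2 * a) * t) := by gcongr
    _ = a⁻¹ * Real.exp (-a * t) := by rw [mul_assoc, ← Real.exp_add]; ring_nf

lemma hasDerivAt_laplace {h : ℝ → E} {z₀ : ℂ} (hh : Continuous h)
    (hconv : ∀ σ : ℝ, 0 < σ → LaplaceConvergent h σ) (hz₀ : 0 < z₀.re) :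
    HasDerivAt (laplace h) (∫ t in Ioi (0:ℝ), (cexp (-z₀ * t) * (-1 * t)) • h t) z₀ := by
  set a := z₀.re / 4 with ha
  have ha0 : 0 < a := by positivity
  have hs : {z : ℂ | 2 * a < z.re} ∈ 𝓝 z₀ :=
    (isOpen_lt continuous_const Complex.continuous_re).mem_nhds (by show 2 * a < z₀.re; linarith)
  refine (hasDerivAt_integral_of_dominated_loc_of_deriv_le hs
    (μ := volume.restrict (Ioi 0)) (F := fun z (t : ℝ) => cexp (-z * t) • h t)
    (F' := fun z (t : ℝ) => (cexp (-z * t) * (-1 * t)) • h t)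
    (bound := fun t : ℝ => a⁻¹ * ‖cexp (-(a : ℂ) * t) • h t‖) ?_ ?_ ?_ ?_ ?_ ?_).2
  · exact .of_forall fun z =>
      (by fun_prop : Continuous fun t : ℝ => cexp (-z * t) • h t).aestronglyMeasurable
  · exact laplaceConvergent_of_re hh (hconv _ hz₀)
  · exact (by fun_prop : Continuous fun t : ℝ =>
      (cexp (-z₀ * t) * (-1 * t)) • h t).aestronglyMeasurable
  · refine (ae_restrict_mem measurableSet_Ioi).mono fun t (ht : 0 < t) z (hz : 2 * a < z.re) => ?_
    have hexp : Real.exp (-z.re * t) ≤ Real.exp (-(2 * a) * t) := by gcongr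
    calc ‖(cexp (-z * t) * (-1 * t)) • h t‖ = t * Real.exp (-z.re * t) * ‖h t‖ := by
          rw [norm_smul, norm_mul, norm_cexp_neg_mul_ofReal]
          simp [abs_of_pos ht, mul_comm]
      _ ≤ t * Real.exp (-(2 * a) * t) * ‖h t‖ := by gcongr
      _ ≤ a⁻¹ * Real.exp (-a * t) * ‖h t‖ :=
          mul_le_mul_of_nonneg_right (mul_rexp_neg_two_mul_le ha0) (norm_nonneg _)
      _ = a⁻¹ * ‖cexp (-(a : ℂ) * t) • h t‖ := by
          rw [norm_smul, norm_cexp_neg_mul_ofReal, ofReal_re, mul_assoc]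
  · exact (hconv a ha0).norm.const_mul _
  · exact .of_forall fun t z _ => (((hasDerivAt_neg z).mul_const (t : ℂ)).cexp).smul_const (h t)

lemma fourier_indicator_eq_laplace (h : ℝ → E) (ξ : ℝ) :
    𝓕 ((Ioi 0).indicator fun t : ℝ => cexp (-t) • h t) ξ =
      laplace h (1 + 2 * Real.pi * ξ * I) := by
  rw [Real.fourier_real_eq_integral_exp_smul, laplace, ← integral_indicator measurableSet_Ioi]
  congr 1
  ext t
  by_cases ht : t ∈ Ioi 0
  · simp only [indicator_of_mem ht, smul_smul, ← Complex.exp_add]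
    congr 2
    push_cast
    ring
  · simp [indicator_of_notMem ht]

variable [CompleteSpace E]

lemma laplace_const (c : E) {μ : ℝ} (hμ : 0 < μ) : laplace (fun _ => c) μ = (μ : ℂ)⁻¹ • c := by
  rw [laplace, integral_smul_const, integral_exp_mul_complex_Ioi (by simpa using hμ)]
  simp

lemma analyticOnNhd_laplace {h : ℝ → E} (hh : Continuous h)
    (hconv : ∀ σ : ℝ, 0 < σ → LaplaceConvergent h σ) :
    AnalyticOnNhd ℂ (laplace h) {z | 0 < z.re} :=
  DifferentiableOn.analyticOnNhd
    (fun _ hz => (hasDerivAt_laplace hh hconv hz).differentiableAt.differentiableWithinAt)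
    (isOpen_lt continuous_const Complex.continuous_re)

lemma laplace_eqOn_zero_of_forall_pos_real {h : ℝ → E} (hh : Continuous h)
    (hconv : ∀ σ : ℝ, 0 < σ → LaplaceConvergent h σ) (h0 : ∀ σ : ℝ, 0 < σ → laplace h σ = 0) :
    EqOn (laplace h) 0 {z | 0 < z.re} := by
  refine (analyticOnNhd_laplace hh hconv).eqOn_zero_of_preconnected_of_frequently_eq_zero
    (convex_halfSpace_re_gt 0).isPreconnected (z₀ := 1) (by simp) ?_
  have hreal : ∃ᶠ σ : ℝ in 𝓝[≠] 1, laplace h σ = 0 :=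
    (eventually_nhdsWithin_of_eventually_nhds (Ioi_mem_nhds one_pos)).frequently.mono h0
  refine Tendsto.frequently (f := ((↑) : ℝ → ℂ)) ?_ hreal
  exact continuous_ofReal.continuousWithinAt.tendsto_nhdsWithin
    fun σ (hσ : σ ≠ 1) => by simpa using hσ

theorem eqOn_zero_of_laplace_eq_zero {h : ℝ → E} (hh : Continuous h)
    (hconv : ∀ σ : ℝ, 0 < σ → LaplaceConvergent h σ) (h0 : ∀ σ : ℝ, 0 < σ → laplace h σ = 0) :
    EqOn h 0 (Ici 0) := by
  set g := (Ioi 0).indicator fun t : ℝ => cexp (-t) • h t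
  have hg : Integrable g := by
    simpa [g, LaplaceConvergent, integrable_indicator_iff measurableSet_Ioi] using hconv 1 one_pos
  have hfourier : 𝓕 g = 0 := funext fun ξ => by
    rw [fourier_indicator_eq_laplace]
    exact laplace_eqOn_zero_of_forall_pos_real hh hconv h0 (by simp)
  have hpos : EqOn h 0 (Ioi 0) := fun t (ht : 0 < t) => by
    have hgt : ContinuousAt g t :=
      ((by fun_prop : Continuous fun t : ℝ => cexp (-t) • h t).continuousAt).congr
        (eqOn_indicator.eventuallyEq_of_mem (Ioi_mem_nhds ht)).symm
    have := hg.fourierInv_fourier_eq (by rw [hfourier]; exact integrable_zero _ _ _) hgt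
    rw [hfourier, Real.fourierInv_eq, show g t = cexp (-t) • h t from indicator_of_mem ht _] at this
    simpa [Complex.exp_ne_zero] using this.symm
  exact hpos.of_subset_closure hh.continuousOn continuousOn_const Ioi_subset_Ici_self
    (by rw [closure_Ioi])

end Laplace

lemma tendsto_cpow_sub_one_mul_div_cpow_sub {μ : ℝ} (hμ : 0 < μ) (a : ℂ) {b : ℂ}
    (hb : 1 - b ≠ 0) :
    Tendsto (fun ν : ℝ => (μ : ℂ) ^ ((ν : ℂ) - 1) * a / ((μ : ℂ) ^ (ν : ℂ) - b))
      (𝓝[>] 0) (𝓝 ((μ : ℂ)⁻¹ * (a / (1 - b)))) := by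
  have hμ' : 0 < (μ : ℂ).re := by simpa using hμ
  have hcont : ContinuousAt
      (fun ν : ℝ => (μ : ℂ) ^ ((ν : ℂ) - 1) * a / ((μ : ℂ) ^ (ν : ℂ) - b)) 0 :=
    .div (by fun_prop (disch := exact Or.inl hμ')) (by fun_prop (disch := exact Or.inl hμ'))
      (by simpa using hb)
  convert hcont.tendsto.mono_left nhdsWithin_le_nhds using 2
  simp [cpow_neg]
  ring

theorem limit_fractional_order_zero
    (d : ℕ) (F : (Fin d → ℝ) → ℂ) (hF : ∀ γ, (F γ).re < 0)
    (f0hat : (Fin d → ℝ) → ℂ)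
    -- `Fu₀ t γ` is the Fourier transform (in x) of the pointwise limit `u₀ = lim_{ν↓0} u_ν`
    (Fu₀ : ℝ → (Fin d → ℝ) → ℂ)
    (hcont : ∀ γ, Continuous fun t => Fu₀ t γ)
    (hintFu₀ : ∀ μ : ℝ, 0 < μ → ∀ γ,
      IntegrableOn (fun t : ℝ => Complex.exp (-(μ : ℂ) * t) * Fu₀ t γ) (Ioi 0))
    -- the Laplace–Fourier transform of `u₀` is the limit, as `ν ↓ 0`, of the
    -- Laplace–Fourier transform `μ^{ν-1} Ff₀(γ)/(μ^ν - F(γ))` of the solution `u_ν`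
    (hlim : ∀ μ : ℝ, 0 < μ → ∀ γ,
      Tendsto (fun ν : ℝ =>
          (μ : ℂ) ^ ((ν : ℂ) - 1) * f0hat γ / ((μ : ℂ) ^ (ν : ℂ) - F γ))
        (nhdsWithin 0 (Ioi 0))
        (nhds (∫ t in Ioi (0:ℝ), Complex.exp (-(μ : ℂ) * t) * Fu₀ t γ))) :
    ∀ t : ℝ, 0 ≤ t → ∀ γ,
      Fu₀ t γ = f0hat γ / (1 - F γ) ∧
      Fu₀ t γ - f0hat γ = F γ * Fu₀ t γ := by
  intro t ht γ
  have hF1 : 1 - F γ ≠ 0 := fun h0 => by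
    have := hF γ
    rw [← sub_eq_zero.1 h0, one_re] at this
    linarith
  set c := f0hat γ / (1 - F γ) with hc
  have hconv : ∀ μ : ℝ, 0 < μ → LaplaceConvergent (fun s => Fu₀ s γ - c) μ := fun μ hμ =>
    LaplaceConvergent.sub (hintFu₀ μ hμ γ) (laplaceConvergent_const c hμ)
  have hlap : ∀ μ : ℝ, 0 < μ → laplace (fun s => Fu₀ s γ - c) μ = 0 := fun μ hμ => by
    rw [laplace_sub (hintFu₀ μ hμ γ) (laplaceConvergent_const c hμ), laplace_const c hμ]
    exact sub_eq_zero.2 (tendsto_nhds_unique (hlim μ hμ γ)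
      (tendsto_cpow_sub_one_mul_div_cpow_sub hμ _ hF1))
  have hFu : Fu₀ t γ = c :=
    sub_eq_zero.1 (eqOn_zero_of_laplace_eq_zero ((hcont γ).sub continuous_const) hconv hlap ht)
  refine ⟨hFu, ?_⟩
  rw [hFu, hc]
  field_simp
  ring
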